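/- Let G be an uncertain signed graph and v an articulation point decomposing G into subgraphs G1, …, Gk that pairwise intersect exactly in {v} and whose union is G. Then R_bal(G) = ∏_{i=1}^k R_bal(G_i). -/

import Mathlib

open SimpleGraph Finset

variable {V : Type*}

/-- A signed graph `(G, σ)` (with `σ e = true` meaning the edge `e` is positive)
has no negative cycle: no cycle has an odd number of negative edges. -/
def NoNegCycle (G : SimpleGraph V) (σ : Sym2 V → Bool) : Prop :=
  ∀ (u : V) (w : G.Walk u u), w.IsCycle →
    ¬ Odd ((w.edges.filter fun e => σ e = false).length)

/- The edge set of `G` as a `Finset`. -/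
open scoped Classical in
noncomputable def edgeFS [Fintype V] (G : SimpleGraph V) : Finset (Sym2 V) :=
  Finset.univ.filter (· ∈ G.edgeSet)

/- The balance rate of an uncertain signed graph: the probability, when each edge `e`
exists independently with probability `p e`, that the realized signed graph is balanced
(contains no negative cycle). -/
open scoped Classical in
noncomputable def Rbal [Fintype V] (G : SimpleGraph V) (σ : Sym2 V → Bool)
    (p : Sym2 V → ℝ) : ℝ :=
  ∑ S ∈ (edgeFS G).powerset,
    ((∏ e ∈ S, p e) * ∏ e ∈ edgeFS G \ S, (1 - p e)) *
      (if NoNegCycle (SimpleGraph.fromEdgeSet (↑S : Set (Sym2 V))) σ then 1 else 0)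

/-- The subgraph of `G` induced on a vertex set `A` (kept on the same vertex type). -/
def restrictTo (G : SimpleGraph V) (A : Set V) : SimpleGraph V where
  Adj x y := G.Adj x y ∧ x ∈ A ∧ y ∈ A
  symm := ⟨fun _ _ h => ⟨h.1.symm, h.2.2, h.2.1⟩⟩
  loopless := ⟨fun x h => G.loopless.irrefl x h.1⟩

/-!
A realization of `G` is a pair of independent realizations of the blocks, so its weight is the
product of their weights, and it remains to see that the union is balanced iff each part is.
A cycle cannot pass from one block to another: it would switch blocks at least twice, each
time at a vertex common to both blocks, i.e. at `v`, whereas a cycle visits `v` only once.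
Splitting off one block at a time gives the product formula.
-/

namespace Finset

variable {α R : Type*} [DecidableEq α]

lemma sum_powerset_union_of_disjoint {M : Type*} [AddCommMonoid M] {s t : Finset α}
    (h : Disjoint s t) (f : Finset α → M) :
    ∑ u ∈ (s ∪ t).powerset, f u = ∑ a ∈ s.powerset, ∑ b ∈ t.powerset, f (a ∪ b) := by
  rw [powerset_union]
  change ∑ u ∈ image₂ (· ⊔ ·) _ _, f u = _
  rw [← image_uncurry_product, sum_image, sum_product]
  · rfl
  rintro ⟨a, b⟩ hab ⟨a', b'⟩ hab' (heq : a ∪ b = a' ∪ b')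
  simp only [coe_product, Set.mem_prod, mem_coe, mem_powerset] at hab hab'
  have hst := disjoint_left.mp h
  have hs : ∀ {c d : Finset α}, c ⊆ s → d ⊆ t → (c ∪ d) ∩ s = c := by
    intro c d hc hd; ext x; simp only [mem_inter, mem_union]; grind
  have ht : ∀ {c d : Finset α}, c ⊆ s → d ⊆ t → (c ∪ d) ∩ t = d := by
    intro c d hc hd; ext x; simp only [mem_inter, mem_union]; grind
  exact Prod.ext (by rw [← hs hab.1 hab.2, heq, hs hab'.1 hab'.2])
    (by rw [← ht hab.1 hab.2, heq, ht hab'.1 hab'.2])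

lemma union_sdiff_union_of_disjoint {E₁ E₂ S₁ S₂ : Finset α} (h : Disjoint E₁ E₂)
    (h₁ : S₁ ⊆ E₁) (h₂ : S₂ ⊆ E₂) : (E₁ ∪ E₂) \ (S₁ ∪ S₂) = (E₁ \ S₁) ∪ (E₂ \ S₂) := by
  have := disjoint_left.mp h
  ext x; simp only [mem_sdiff, mem_union]; grind

lemma sum_powerset_union_weight_mul [CommSemiring R] {E₁ E₂ : Finset α} (h : Disjoint E₁ E₂)
    (p q : α → R) (f : Finset α → R)
    (hf : ∀ S₁ ⊆ E₁, ∀ S₂ ⊆ E₂, f (S₁ ∪ S₂) = f S₁ * f S₂) :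
    ∑ S ∈ (E₁ ∪ E₂).powerset, ((∏ e ∈ S, p e) * ∏ e ∈ (E₁ ∪ E₂) \ S, q e) * f S =
      (∑ S ∈ E₁.powerset, ((∏ e ∈ S, p e) * ∏ e ∈ E₁ \ S, q e) * f S) *
        ∑ S ∈ E₂.powerset, ((∏ e ∈ S, p e) * ∏ e ∈ E₂ \ S, q e) * f S := by
  rw [sum_powerset_union_of_disjoint h, sum_mul_sum]
  refine sum_congr rfl fun S₁ hS₁ => sum_congr rfl fun S₂ hS₂ => ?_
  rw [mem_powerset] at hS₁ hS₂
  rw [hf S₁ hS₁ S₂ hS₂, prod_union (h.mono hS₁ hS₂), union_sdiff_union_of_disjoint h hS₁ hS₂,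
    prod_union (h.mono sdiff_subset sdiff_subset)]
  ring

end Finset

lemma Set.sym2_mono {α : Type*} {s t : Set α} (h : s ⊆ t) : s.sym2 ⊆ t.sym2 := by
  rintro ⟨x, y⟩ ⟨hx, hy⟩
  exact ⟨h hx, h hy⟩

namespace SimpleGraph

variable {G H : SimpleGraph V} {v : V}

lemma Walk.edges_subset_or_of_notMem_inner (hGH : G.support ∩ H.support ⊆ {v}) :
    ∀ {a b : V} (w : (G ⊔ H).Walk a b), v ∉ w.support.tail.dropLast →
      (∀ e ∈ w.edges, e ∈ G.edgeSet) ∨ (∀ e ∈ w.edges, e ∈ H.edgeSet)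
  | _, _, .nil, _ => by simp
  | _, _, .cons h .nil, _ => by simpa using h
  | _, _, .cons (v := c) h (.cons h' w), hv => by
    have ih := edges_subset_or_of_notMem_inner hGH (.cons h' w)
    simp only [support_cons, List.tail_cons, List.dropLast_cons_of_ne_nil w.support_ne_nil,
      List.mem_cons, not_or] at hv ih
    have hc : c ∈ G.support → c ∈ H.support → False := fun hG hH => hv.1 (hGH ⟨hG, hH⟩).symm
    simp only [edges_cons, List.forall_mem_cons] at ih ⊢
    rcases h with hG | hH <;> rcases ih hv.2 with ⟨hG', hw⟩ | ⟨hH', hw⟩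
    · exact .inl ⟨hG, hG', hw⟩
    · exact (hc hG.mem_support_right hH'.mem_support_left).elim
    · exact (hc hG'.mem_support_left hH.mem_support_right).elim
    · exact .inr ⟨hH, hH', hw⟩

lemma Walk.IsCycle.notMem_support_tail_dropLast {c : G.Walk v v} (hc : c.IsCycle) :
    v ∉ c.support.tail.dropLast := by
  have hnd := hc.support_nodup
  have hne : c.support.tail ≠ [] := List.ne_nil_of_mem (Walk.end_mem_tail_support hc.not_nil)
  rw [← List.dropLast_concat_getLast hne, List.getLast_tail, Walk.getLast_support,
    List.nodup_append] at hnd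
  exact fun hmem => hnd.2.2 _ hmem _ (List.mem_singleton_self v) rfl

lemma Walk.IsCycle.edges_subset_or (hGH : G.support ∩ H.support ⊆ {v}) {u : V}
    {w : (G ⊔ H).Walk u u} (hw : w.IsCycle) :
    (∀ e ∈ w.edges, e ∈ G.edgeSet) ∨ (∀ e ∈ w.edges, e ∈ H.edgeSet) := by
  classical
  by_cases hv : v ∈ w.support
  · simpa only [(w.rotate_edges v hv).perm.mem_iff] using
      (w.rotate v hv).edges_subset_or_of_notMem_inner hGH
        (hw.rotate hv).notMem_support_tail_dropLast
  · exact w.edges_subset_or_of_notMem_inner hGH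
      fun h => hv (List.mem_of_mem_tail (List.mem_of_mem_dropLast h))

lemma disjoint_edgeSet_sym2_of_subset_singleton {s : Set V} (hs : s ⊆ {v}) :
    Disjoint G.edgeSet s.sym2 := by
  rw [Set.disjoint_left]
  rintro ⟨x, y⟩ hxy ⟨hx, hy⟩
  exact G.ne_of_adj hxy ((hs hx).trans (hs hy).symm)

lemma support_fromEdgeSet_subset {s : Set (Sym2 V)} {A : Set V} (h : s ⊆ A.sym2) :
    (fromEdgeSet s).support ⊆ A := by
  rw [← edgeSet_subset_sym2_iff, edgeSet_fromEdgeSet]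
  exact Set.sdiff_subset.trans h

end SimpleGraph

section Balance

variable {G H : SimpleGraph V} {σ : Sym2 V → Bool}

lemma NoNegCycle.not_odd_of_edges_subset (hG : NoNegCycle G σ) {u : V} {w : H.Walk u u}
    (hw : w.IsCycle) (hsub : ∀ e ∈ w.edges, e ∈ G.edgeSet) :
    ¬ Odd ((w.edges.filter fun e => σ e = false).length) := by
  simpa only [Walk.edges_transfer] using hG u (w.transfer G hsub) (hw.transfer hsub)

lemma NoNegCycle.anti (hGH : G ≤ H) (hH : NoNegCycle H σ) : NoNegCycle G σ :=
  fun _ w hw =>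
    hH.not_odd_of_edges_subset hw fun _ he => edgeSet_mono hGH (w.edges_subset_edgeSet he)

lemma noNegCycle_sup_iff {v : V} (hGH : G.support ∩ H.support ⊆ {v}) :
    NoNegCycle (G ⊔ H) σ ↔ NoNegCycle G σ ∧ NoNegCycle H σ :=
  ⟨fun h => ⟨h.anti le_sup_left, h.anti le_sup_right⟩, fun ⟨hG, hH⟩ _ _ hw =>
    (hw.edges_subset_or hGH).elim (hG.not_odd_of_edges_subset hw) (hH.not_odd_of_edges_subset hw)⟩

lemma noNegCycle_bot : NoNegCycle (⊥ : SimpleGraph V) σ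
  | _, .nil, hw => (hw.ne_nil rfl).elim
  | _, .cons h _, _ => h.elim

end Balance

lemma edgeSet_restrictTo (G : SimpleGraph V) (A : Set V) :
    (restrictTo G A).edgeSet = G.edgeSet ∩ A.sym2 := by
  ext ⟨x, y⟩
  rfl

lemma restrictTo_restrictTo_of_subset (G : SimpleGraph V) {A B : Set V} (h : A ⊆ B) :
    restrictTo (restrictTo G B) A = restrictTo G A := by
  ext x y
  exact ⟨fun ⟨⟨hxy, _⟩, hx, hy⟩ => ⟨hxy, hx, hy⟩, fun ⟨hxy, hx, hy⟩ => ⟨⟨hxy, h hx, h hy⟩, hx, hy⟩⟩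

section Rbal

variable [Fintype V] {G : SimpleGraph V} {σ : Sym2 V → Bool} {p : Sym2 V → ℝ}

lemma mem_edgeFS {e : Sym2 V} : e ∈ edgeFS G ↔ e ∈ G.edgeSet := by
  classical
  simp [edgeFS]

lemma mem_edgeFS_restrictTo {A : Set V} {e : Sym2 V} :
    e ∈ edgeFS (restrictTo G A) ↔ e ∈ G.edgeSet ∧ e ∈ A.sym2 := by
  rw [mem_edgeFS, edgeSet_restrictTo, Set.mem_inter_iff]

lemma Rbal_bot : Rbal ⊥ σ p = 1 := by
  classical
  have : edgeFS (⊥ : SimpleGraph V) = ∅ := by ext; simp [mem_edgeFS]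
  simp [Rbal, this, noNegCycle_bot]

lemma Rbal_eq_mul_of_inter_subset_singleton {B C : Set V} {v : V} (hBC : B ∩ C ⊆ {v})
    (hG : G.edgeSet ⊆ B.sym2 ∪ C.sym2) :
    Rbal G σ p = Rbal (restrictTo G B) σ p * Rbal (restrictTo G C) σ p := by
  classical
  set E₁ := edgeFS (restrictTo G B)
  set E₂ := edgeFS (restrictTo G C)
  have hE₁ : ↑E₁ ⊆ B.sym2 := fun e he => (mem_edgeFS_restrictTo.mp he).2
  have hE₂ : ↑E₂ ⊆ C.sym2 := fun e he => (mem_edgeFS_restrictTo.mp he).2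
  have hdisj : Disjoint E₁ E₂ := Finset.disjoint_left.mpr fun e h₁ h₂ =>
    Set.disjoint_left.mp (disjoint_edgeSet_sym2_of_subset_singleton hBC)
      (mem_edgeFS_restrictTo.mp h₁).1 (by rw [Set.sym2_inter]; exact ⟨hE₁ h₁, hE₂ h₂⟩)
  have hE : edgeFS G = E₁ ∪ E₂ := by
    ext e
    rw [mem_union, mem_edgeFS_restrictTo, mem_edgeFS_restrictTo, mem_edgeFS]
    have := @hG e
    rw [Set.mem_union] at this
    tauto
  have hbal : ∀ S₁ ⊆ E₁, ∀ S₂ ⊆ E₂, NoNegCycle (fromEdgeSet ↑(S₁ ∪ S₂)) σ ↔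
      NoNegCycle (fromEdgeSet ↑S₁) σ ∧ NoNegCycle (fromEdgeSet ↑S₂) σ := by
    intro S₁ h₁ S₂ h₂
    rw [coe_union, fromEdgeSet_union, noNegCycle_sup_iff]
    exact (Set.inter_subset_inter (support_fromEdgeSet_subset ((coe_subset.mpr h₁).trans hE₁))
      (support_fromEdgeSet_subset ((coe_subset.mpr h₂).trans hE₂))).trans hBC
  rw [Rbal, Rbal, Rbal, hE]
  exact sum_powerset_union_weight_mul hdisj p (fun e => 1 - p e) _ fun S₁ h₁ S₂ h₂ => by
    simp only [ite_zero_mul_ite_zero, mul_one, hbal S₁ h₁ S₂ h₂]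

lemma Rbal_eq_prod_of_inter_subset_singleton {v : V} :
    ∀ {k : ℕ} (G : SimpleGraph V) (A : Fin k → Set V), (∀ i j, i ≠ j → A i ∩ A j ⊆ {v}) →
      G.edgeSet ⊆ ⋃ i, (A i).sym2 → Rbal G σ p = ∏ i, Rbal (restrictTo G (A i)) σ p
  | 0, G, _, _, hG => by
    have hbot : G = ⊥ := edgeSet_eq_empty.mp (Set.subset_empty_iff.mp (by simpa using hG))
    rw [hbot, Rbal_bot, Fin.prod_univ_zero]
  | k + 1, G, A, hA, hG => by
    set C := ⋃ i : Fin k, A i.succ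
    have hsubC : ∀ i : Fin k, A i.succ ⊆ C := Set.subset_iUnion (fun i : Fin k => A i.succ)
    have h0C : A 0 ∩ C ⊆ {v} := by
      simp only [C, Set.inter_iUnion, Set.iUnion_subset_iff]
      exact fun i => hA 0 i.succ (Fin.succ_ne_zero i).symm
    have hsplit : G.edgeSet ⊆ (A 0).sym2 ∪ C.sym2 := by
      intro e he
      obtain ⟨j, hj⟩ := Set.mem_iUnion.mp (hG he)
      cases j using Fin.cases with
      | zero => exact .inl hj
      | succ i => exact .inr (Set.sym2_mono (hsubC i) hj)
    have hC : (restrictTo G C).edgeSet ⊆ ⋃ i : Fin k, (A i.succ).sym2 := by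
      rw [edgeSet_restrictTo]
      rintro e ⟨he, heC⟩
      obtain ⟨j, hj⟩ := Set.mem_iUnion.mp (hG he)
      cases j using Fin.cases with
      | zero =>
        have : e ∈ (A 0 ∩ C).sym2 := Set.sym2_inter _ _ ▸ ⟨hj, heC⟩
        exact absurd this (Set.disjoint_left.mp (disjoint_edgeSet_sym2_of_subset_singleton h0C) he)
      | succ i => exact Set.mem_iUnion.mpr ⟨i, hj⟩
    rw [Rbal_eq_mul_of_inter_subset_singleton h0C hsplit, Fin.prod_univ_succ,
      Rbal_eq_prod_of_inter_subset_singleton (restrictTo G C) (fun i : Fin k => A i.succ)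
        (fun i j hij => hA _ _ ((Fin.succ_injective _).ne hij)) hC]
    simp only [restrictTo_restrictTo_of_subset G (hsubC _)]

end Rbal

theorem stmt3_general [Fintype V] (G : SimpleGraph V) (σ : Sym2 V → Bool) (p : Sym2 V → ℝ)
    (v : V) (k : ℕ) (A : Fin k → Set V)
    (hpair : ∀ i j, i ≠ j → A i ∩ A j = {v})
    (hedge : ∀ x y, G.Adj x y → ∃ i, x ∈ A i ∧ y ∈ A i) :
    Rbal G σ p = ∏ i, Rbal (restrictTo G (A i)) σ p := by
  refine Rbal_eq_prod_of_inter_subset_singleton G A (fun i j hij => (hpair i j hij).subset) ?_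
  rintro ⟨x, y⟩ hxy
  simpa using hedge x y hxy

/-- Articulation point decomposition: if the vertex sets `A i` pairwise intersect
exactly in the articulation point `v`, cover all vertices, and every edge of `G`
lies inside some `A i`, then the balance rate of `G` is the product of the balance
rates of the induced subgraphs. -/
theorem stmt3 [Fintype V] (G : SimpleGraph V) (σ : Sym2 V → Bool) (p : Sym2 V → ℝ)
    (hp0 : ∀ e, 0 ≤ p e) (hp1 : ∀ e, p e ≤ 1)
    (v : V) (k : ℕ) (A : Fin k → Set V)
    (hv : ∀ i, v ∈ A i)
    (hpair : ∀ i j, i ≠ j → A i ∩ A j = {v})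
    (hcover : (⋃ i, A i) = Set.univ)
    (hedge : ∀ x y, G.Adj x y → ∃ i, x ∈ A i ∧ y ∈ A i) :
    Rbal G σ p = ∏ i, Rbal (restrictTo G (A i)) σ p :=
  stmt3_general G σ p v k A hpair hedge
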